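/- Under the same setup, if λ_k is a multiple eigenvalue with cλ_k+d = 0 (so y_k(1)=0) and aλ_k+b ≠ 0, then ∫₀¹ y_k(x)² dx = -(ad-bc)·(y_k'(1))² / (aλ_k+b)². Moreover the associated function satisfies y_{k+1}(1) = c·y_k'(1)/(aλ_k+b). -/

import Mathlib

open MeasureTheory Set

/-- Lemma 2.3(b): norm of the eigenfunction at a multiple eigenvalue `λk = -d/c`, together with the value `y_{k+1}(1) = c y_k'(1)/(aλ_k+b)` of the associated function. -/
theorem norm_eigenfunction_multiple_critical
    (a b c d β : ℝ) (habcd : a * d - b * c < 0) (hac : a * c ≠ 0)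
    (hβ0 : 0 ≤ β) (hβπ : β < Real.pi)
    (q : ℝ → ℝ) (hq : ContinuousOn q (Icc (0:ℝ) 1))
    (lam : ℝ) (hcd : c * lam + d = 0) (hab : a * lam + b ≠ 0)
    (y0 y0' y0'' y1 y1' y1'' : ℝ → ℝ)
    (hy0 : ∀ x ∈ Icc (0:ℝ) 1, HasDerivAt y0 (y0' x) x)
    (hy0' : ∀ x ∈ Icc (0:ℝ) 1, HasDerivAt y0' (y0'' x) x)
    (hy0'' : ContinuousOn y0'' (Icc (0:ℝ) 1))
    (hy1 : ∀ x ∈ Icc (0:ℝ) 1, HasDerivAt y1 (y1' x) x)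
    (hy1' : ∀ x ∈ Icc (0:ℝ) 1, HasDerivAt y1' (y1'' x) x)
    (hy1'' : ContinuousOn y1'' (Icc (0:ℝ) 1))
    (hode0 : ∀ x ∈ Icc (0:ℝ) 1, -y0'' x + q x * y0 x = lam * y0 x)
    (hode1 : ∀ x ∈ Icc (0:ℝ) 1, -y1'' x + q x * y1 x = lam * y1 x + y0 x)
    (hbc00 : y0 0 * Real.cos β = y0' 0 * Real.sin β)
    (hbc01 : y1 0 * Real.cos β = y1' 0 * Real.sin β)
    (hbc10 : (a * lam + b) * y0 1 = (c * lam + d) * y0' 1)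
    (hbc11 : (a * lam + b) * y1 1 + a * y0 1 = (c * lam + d) * y1' 1 + c * y0' 1) :
    (∫ x in (0:ℝ)..1, (y0 x) ^ 2
      = -(a * d - b * c) * (y0' 1) ^ 2 / (a * lam + b) ^ 2)
    ∧ y1 1 = c * y0' 1 / (a * lam + b) := by

  have h01 : (0:ℝ) ∈ Icc (0:ℝ) 1 := by norm_num
  have h11 : (1:ℝ) ∈ Icc (0:ℝ) 1 := by norm_num
  have hy01 : y0 1 = 0 := by
    have h := hbc10
    rw [hcd] at h
    have : (a * lam + b) * y0 1 = 0 := by linarith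
    exact (mul_eq_zero.mp this).resolve_left hab
  have hy11 : y1 1 = c * y0' 1 / (a * lam + b) := by
    have h := hbc11
    rw [hcd, hy01] at h
    field_simp
    linarith
  refine ⟨?_, hy11⟩
  have hW : ∀ x ∈ uIcc (0:ℝ) 1,
      HasDerivAt (fun x => y0' x * y1 x - y0 x * y1' x) ((y0 x) ^ 2) x := by
    intro x hx
    rw [uIcc_of_le zero_le_one] at hx
    have h1 := ((hy0' x hx).mul (hy1 x hx)).sub ((hy0 x hx).mul (hy1' x hx))
    refine h1.congr_deriv ?_
    have e0 := hode0 x hx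
    have e1 := hode1 x hx
    linear_combination (y0 x) * e1 - (y1 x) * e0
  have hcont : ContinuousOn (fun x => (y0 x) ^ 2) (uIcc (0:ℝ) 1) := by
    rw [uIcc_of_le zero_le_one]
    have hy0c : ContinuousOn y0 (Icc (0:ℝ) 1) :=
      fun x hx => (hy0 x hx).continuousAt.continuousWithinAt
    exact hy0c.pow 2
  have hint : IntervalIntegrable (fun x => (y0 x) ^ 2) volume 0 1 :=
    hcont.intervalIntegrable
  have hftc := intervalIntegral.integral_eq_sub_of_hasDerivAt hW hint
  have hD : y0' 0 * y1 0 - y0 0 * y1' 0 = 0 := by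
    have hc : (y0' 0 * y1 0 - y0 0 * y1' 0) * Real.cos β = 0 := by
      linear_combination y0' 0 * hbc01 - y1' 0 * hbc00
    have hs : (y0' 0 * y1 0 - y0 0 * y1' 0) * Real.sin β = 0 := by
      linear_combination y0 0 * hbc01 - y1 0 * hbc00
    have hpy := Real.sin_sq_add_cos_sq β
    linear_combination (-(y0' 0 * y1 0 - y0 0 * y1' 0)) * hpy + Real.sin β * hs + Real.cos β * hc
  rw [hftc, hy01, hy11, hD]
  field_simp
  linear_combination (y0' 1 ^ 2 * a) * hcd
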